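/- Let φ : (0,∞) → (0,∞) be continuous, strictly increasing with φ(0⁺)=0, φ(1)=1, φ(∞)=∞, let μ be a nonzero finite Borel measure on S^{n-1} not concentrated on any closed hemisphere, and let (M_i) be convex bodies with the origin in their interiors such that the sequence ∫_{S^{n-1}} φ(h_{M_i}) dμ is bounded. Then the sequence (M_i) is uniformly bounded, i.e. sup_i max_{u∈S^{n-1}} ρ_{M_i}(u) < ∞. -/

import Mathlib

/-!
If `ρ_{M_i}(u) > r` then `r u ∈ M_i`, so `h_{M_i} ≥ r δ` on the cap `{v : ⟪v, u⟫ ≥ δ}`.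
Because `μ` is not concentrated on a closed hemisphere, compactness of the sphere yields
`δ, m > 0` such that every such cap has measure at least `m`. Hence
`∫ φ(h_{M_i}) dμ ≥ m φ(r δ)`, and `φ(t) → ∞` bounds `r` uniformly in `i` and `u`.
-/

open MeasureTheory Metric Filter Set ENNReal

noncomputable section

abbrev E (n : ℕ) := EuclideanSpace ℝ (Fin n)

abbrev Sph (n : ℕ) := ↥(Metric.sphere (0 : E n) 1)

/-- Convex body in `ℝⁿ` with the origin in its interior. -/
def IsBody {n : ℕ} (K : Set (E n)) : Prop :=
  IsCompact K ∧ Convex ℝ K ∧ 0 ∈ interior K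

/-- Support function of a set. -/
def supportFn {n : ℕ} (K : Set (E n)) (u : E n) : ℝ :=
  sSup ((fun x => (inner ℝ x u : ℝ)) '' K)

/-- Polar body. -/
def polarBody {n : ℕ} (K : Set (E n)) : Set (E n) :=
  {y | ∀ x ∈ K, (inner ℝ x y : ℝ) ≤ 1}

/-- Radial function. -/
def radialFn {n : ℕ} (K : Set (E n)) (u : E n) : ℝ :=
  sSup {r : ℝ | 0 ≤ r ∧ r • u ∈ K}

/-- Volume of the unit ball in `ℝⁿ`. -/
def unitBallVol (n : ℕ) : ℝ≥0∞ := volume (Metric.closedBall (0 : E n) 1)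

lemma Continuous.integrable_of_compactSpace {X : Type*} [TopologicalSpace X] [CompactSpace X]
    [MeasurableSpace X] [OpensMeasurableSpace X] {f : X → ℝ} (hf : Continuous f)
    (μ : Measure X) [IsFiniteMeasure μ] : Integrable f μ :=
  (BoundedContinuousFunction.mkOfCompact ⟨f, hf⟩).integrable μ

section SupportFunction

variable {n : ℕ} {K : Set (E n)}

lemma IsCompact.inner_le_supportFn (hK : IsCompact K) {x : E n} (hx : x ∈ K) (v : E n) :
    (inner ℝ x v : ℝ) ≤ supportFn K v :=
  le_csSup (hK.image (by fun_prop)).bddAbove (mem_image_of_mem _ hx)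

lemma IsCompact.continuous_supportFn (hK : IsCompact K) : Continuous (supportFn K) :=
  hK.continuous_sSup (f := fun v x => (inner ℝ x v : ℝ)) (by fun_prop)

lemma supportFn_pos (hK : IsCompact K) (h0 : 0 ∈ interior K) {v : E n} (hv : v ≠ 0) :
    0 < supportFn K v := by
  obtain ⟨ε, hε, hball⟩ := Metric.mem_nhds_iff.mp (mem_interior_iff_mem_nhds.mp h0)
  have hv' : 0 < ‖v‖ := norm_pos_iff.mpr hv
  set s := ε / (2 * ‖v‖)
  have hs : 0 < s := by positivity
  have hsv : s • v ∈ K := hball <| by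
    rw [mem_ball_zero_iff, norm_smul, Real.norm_of_nonneg hs.le]
    calc s * ‖v‖ = ε / 2 := by simp only [s]; field_simp
      _ < ε := half_lt_self hε
  calc 0 < s * ‖v‖ ^ 2 := by positivity
    _ = inner ℝ (s • v) v := by rw [real_inner_smul_left, real_inner_self_eq_norm_sq]
    _ ≤ supportFn K v := hK.inner_le_supportFn hsv v

end SupportFunction

section Sphere

variable {n : ℕ}

def sphereCap (v : E n) (δ : ℝ) : Set (Sph n) :=
  {u | δ ≤ (inner ℝ (u : E n) v : ℝ)}

lemma measurableSet_sphereCap (v : E n) (δ : ℝ) : MeasurableSet (sphereCap v δ) :=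
  (isClosed_le continuous_const (by fun_prop)).measurableSet

lemma mul_le_supportFn_of_mem_sphereCap {K : Set (E n)} (hK : IsCompact K) {r δ : ℝ}
    (hr : 0 ≤ r) {w : E n} (hrw : r • w ∈ K) {u : Sph n} (hu : u ∈ sphereCap w δ) :
    r * δ ≤ supportFn K u :=
  calc r * δ ≤ r * inner ℝ (u : E n) w := mul_le_mul_of_nonneg_left hu hr
    _ = inner ℝ (r • w) (u : E n) := by rw [real_inner_smul_left, real_inner_comm]
    _ ≤ supportFn K u := hK.inner_le_supportFn hrw u

lemma continuous_comp_supportFn {φ : ℝ → ℝ} (hφc : ContinuousOn φ (Ioi 0))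
    {K : Set (E n)} (hK : IsCompact K) (h0 : 0 ∈ interior K) :
    Continuous fun u : Sph n => φ (supportFn K u) :=
  hφc.comp_continuous (hK.continuous_supportFn.comp continuous_subtype_val) fun u =>
    supportFn_pos hK h0 (ne_zero_of_mem_unit_sphere u)

/-- By compactness the hemisphere integrals are bounded below by some `c > 0`, and since
`max ⟪u, v⟫ 0 ≤ δ + 1_{cap v δ}(u)`, each cap of thickness `δ` has measure at least
`c - δ μ(S^{n-1})`. -/
lemma exists_forall_le_measureReal_sphereCap (μ : Measure (Sph n)) [IsFiniteMeasure μ]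
    (hconc : ∀ v : Sph n, 0 < ∫ u : Sph n, max (inner ℝ (u : E n) (v : E n) : ℝ) 0 ∂μ) :
    ∃ δ > 0, ∃ m > 0, ∀ v : Sph n, m ≤ μ.real (sphereCap (v : E n) δ) := by
  set G : Sph n → ℝ := fun v => ∫ u : Sph n, max (inner ℝ (u : E n) (v : E n) : ℝ) 0 ∂μ
  have hG : Continuous G := by
    simpa [G] using continuous_parametric_integral_of_continuous (μ := μ)
      (f := fun (v u : Sph n) => max (inner ℝ (u : E n) (v : E n) : ℝ) 0) (by fun_prop)
      isCompact_univ
  obtain ⟨c, hc, hcG⟩ := isCompact_univ.exists_forall_le' hG.continuousOn fun v _ => hconc v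
  obtain ⟨δ, hδ, hδc⟩ := exists_pos_mul_lt hc (μ.real univ)
  refine ⟨δ, hδ, c - μ.real univ * δ, by linarith, fun v => ?_⟩
  have hpointwise : ∀ u : Sph n, max (inner ℝ (u : E n) (v : E n) : ℝ) 0
      ≤ δ + (sphereCap (v : E n) δ).indicator 1 u := by
    intro u
    by_cases hu : u ∈ sphereCap (v : E n) δ
    · have : (inner ℝ (u : E n) (v : E n) : ℝ) ≤ 1 := by
        simpa using real_inner_le_norm (u : E n) (v : E n)
      simp only [indicator_of_mem hu, Pi.one_apply, max_le_iff]
      constructor <;> linarith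
    · have : (inner ℝ (u : E n) (v : E n) : ℝ) < δ := not_le.mp hu
      simp only [indicator_of_notMem hu, add_zero, max_le_iff]
      constructor <;> linarith
  have hGv : G v ≤ μ.real univ * δ + μ.real (sphereCap (v : E n) δ) := by
    have hcap := measurableSet_sphereCap (v : E n) δ
    have hind : Integrable ((sphereCap (v : E n) δ).indicator 1) μ :=
      (integrable_const (1 : ℝ)).indicator hcap
    calc G v ≤ ∫ u, (δ + (sphereCap (v : E n) δ).indicator 1 u) ∂μ :=
          integral_mono (Continuous.integrable_of_compactSpace (by fun_prop) μ)
            ((integrable_const δ).add hind) hpointwise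
      _ = μ.real univ * δ + μ.real (sphereCap (v : E n) δ) := by
          rw [integral_add (integrable_const δ) hind, integral_const,
            integral_indicator_one hcap, smul_eq_mul]
  linarith [hcG v (mem_univ v)]

end Sphere

theorem bounded_orlicz_integral_implies_bounded_general {n : ℕ}
    (φ : ℝ → ℝ) (hφc : ContinuousOn φ (Ioi 0)) (hφmono : StrictMonoOn φ (Ioi 0))
    (hφpos : ∀ t ∈ Ioi (0 : ℝ), 0 < φ t)
    (hφtop : Tendsto φ atTop atTop)
    (μ : Measure (Sph n)) [IsFiniteMeasure μ]
    (hconc : ∀ v : Sph n, 0 < ∫ u : Sph n, max (inner ℝ (u : E n) (v : E n) : ℝ) 0 ∂μ)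
    (M : ℕ → Set (E n)) (hM : ∀ i, IsBody (M i))
    (hbd : ∃ C : ℝ, ∀ i, ∫ u : Sph n, φ (supportFn (M i) (u : E n)) ∂μ ≤ C) :
    ∃ R : ℝ, ∀ i, ∀ u : Sph n, radialFn (M i) (u : E n) ≤ R := by
  obtain ⟨C, hC⟩ := hbd
  obtain ⟨δ, hδ, m, hm, hcap⟩ := exists_forall_le_measureReal_sphereCap μ hconc
  obtain ⟨t, ht, htC⟩ :=
    ((eventually_gt_atTop 0).and (hφtop.eventually_gt_atTop (C / m))).exists
  refine ⟨t / δ, fun i u => Real.sSup_le (fun r ⟨hr, hru⟩ => ?_) (by positivity)⟩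
  by_contra! hlt
  obtain ⟨hK, -, h0⟩ := hM i
  have hφt : 0 ≤ φ t := (hφpos t ht).le
  have hφh : ∀ v : Sph n, 0 ≤ φ (supportFn (M i) v) := fun v =>
    (hφpos _ (supportFn_pos hK h0 (ne_zero_of_mem_unit_sphere v))).le
  have hrδ : t ≤ r * δ := ((div_lt_iff₀ hδ).mp hlt).le
  have hcap_sub : sphereCap (u : E n) δ ⊆ {v | φ t ≤ φ (supportFn (M i) v)} := fun v hv =>
    have htv := hrδ.trans (mul_le_supportFn_of_mem_sphereCap hK hr hru hv)
    hφmono.monotoneOn ht (ht.trans_le htv) htv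
  refine lt_irrefl C ?_
  calc C < φ t * m := (div_lt_iff₀ hm).mp htC
    _ ≤ φ t * μ.real (sphereCap (u : E n) δ) := mul_le_mul_of_nonneg_left (hcap u) hφt
    _ ≤ φ t * μ.real {v | φ t ≤ φ (supportFn (M i) v)} :=
        mul_le_mul_of_nonneg_left (measureReal_mono hcap_sub) hφt
    _ ≤ ∫ v, φ (supportFn (M i) v) ∂μ :=
        mul_meas_ge_le_integral_of_nonneg (Eventually.of_forall hφh)
          ((continuous_comp_supportFn hφc hK h0).integrable_of_compactSpace μ) _
    _ ≤ C := hC i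

theorem bounded_orlicz_integral_implies_bounded {n : ℕ}
    (φ : ℝ → ℝ) (hφc : ContinuousOn φ (Ioi 0)) (hφmono : StrictMonoOn φ (Ioi 0))
    (hφpos : ∀ t ∈ Ioi (0 : ℝ), 0 < φ t)
    (hφ0 : Tendsto φ (nhdsWithin 0 (Ioi 0)) (nhds 0))
    (hφ1 : φ 1 = 1) (hφtop : Tendsto φ atTop atTop)
    (μ : Measure (Sph n)) [IsFiniteMeasure μ] (hμ : μ ≠ 0)
    (hconc : ∀ v : Sph n, 0 < ∫ u : Sph n, max (inner ℝ (u : E n) (v : E n) : ℝ) 0 ∂μ)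
    (M : ℕ → Set (E n)) (hM : ∀ i, IsBody (M i))
    (hbd : ∃ C : ℝ, ∀ i, ∫ u : Sph n, φ (supportFn (M i) (u : E n)) ∂μ ≤ C) :
    ∃ R : ℝ, ∀ i, ∀ u : Sph n, radialFn (M i) (u : E n) ≤ R :=
  bounded_orlicz_integral_implies_bounded_general φ hφc hφmono hφpos hφtop μ hconc M hM hbd
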